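/- arXiv:2410.18512 — 3 statements merged into one kernel-verified Lean document; each statement's English description precedes it below -/
import Mathlib

section
/- Theorem 3: If f and g are injective and the splitting condition is satisfied, then ℙ⁻(S) = 1. -/
open MeasureTheory Filter Topology Set
open scoped BigOperators

noncomputable section

/-- Tail sum ∑_{j ≥ i} p_j. -/
def tailSum (p : ℕ → ℝ) (i : ℕ) : ℝ := ∑' j : ℕ, p (i + j)

/-- Invariant distribution m_i = (∑_{j≥i} p_j)/(1+E). -/
def mdist (p : ℕ → ℝ) (E : ℝ) (i : ℕ) : ℝ := tailSum p i / (1 + E)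

/-- Transition matrix entries: p_{0j} = p_j, p_{(k+1)k} = 1, else 0. -/
def Ptrans (p : ℕ → ℝ) (i j : ℕ) : ℝ := if i = 0 then p j else if i = j + 1 then 1 else 0

/-- Reversed transition matrix q_{ij} = (m_j / m_i) · p_{ji}. -/
def qtrans (p : ℕ → ℝ) (E : ℝ) (i j : ℕ) : ℝ := mdist p E j / mdist p E i * Ptrans p j i

/-- Cylinder set of length n determined by the first n values of ξ. -/
def cyl (ξ : ℕ → ℕ) (n : ℕ) : Set (ℕ → ℕ) := {ω | ∀ i < n, ω i = ξ i}

/-- Probability assigned by ℙ⁻ to the cylinder [ξ₀,…,ξ_{n-1}]. -/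
def cylProbQ (p : ℕ → ℝ) (E : ℝ) (ξ : ℕ → ℕ) (n : ℕ) : ℝ :=
  mdist p E (ξ 0) * ∏ i ∈ Finset.range (n - 1), qtrans p E (ξ i) (ξ (i + 1))

/-- Probability assigned by ℙ to the cylinder [ξ₀,…,ξ_{n-1}]. -/
def cylProbP (p : ℕ → ℝ) (E : ℝ) (ξ : ℕ → ℕ) (n : ℕ) : ℝ :=
  mdist p E (ξ 0) * ∏ i ∈ Finset.range (n - 1), Ptrans p (ξ i) (ξ (i + 1))

/-- The family f₀ = g, f_k = f for k ≥ 1. -/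
def fseq (a b : ℝ) (g f : Set.Icc a b → Set.Icc a b) : ℕ → Set.Icc a b → Set.Icc a b :=
  fun k => if k = 0 then g else f

/-- itf fI ξ n = f_{ξ₀} ∘ f_{ξ₁} ∘ ⋯ ∘ f_{ξ_{n-1}}. -/
def itf (a b : ℝ) (fI : ℕ → Set.Icc a b → Set.Icc a b) (ξ : ℕ → ℕ) :
    ℕ → Set.Icc a b → Set.Icc a b
  | 0 => id
  | n + 1 => fun x => itf a b fI ξ n (fI (ξ n) x)

/-- itfRev fI a n = f_{a_{n-1}} ∘ ⋯ ∘ f_{a_0}  (i.e. f_{a_n}∘⋯∘f_{a_1} with 1-based indexing). -/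
def itfRev (a b : ℝ) (fI : ℕ → Set.Icc a b → Set.Icc a b) (c : ℕ → ℕ) :
    ℕ → Set.Icc a b → Set.Icc a b
  | 0 => id
  | n + 1 => fun x => fI (c n) (itfRev a b fI c n x)

/-- I_ξ = ⋂_{n ≥ 1} (f_{ξ₀}∘⋯∘f_{ξ_{n-1}})(I). -/
def Iset (a b : ℝ) (fI : ℕ → Set.Icc a b → Set.Icc a b) (ξ : ℕ → ℕ) : Set (Set.Icc a b) :=
  ⋂ n : ℕ, itf a b fI ξ (n + 1) '' Set.univ

/-- S = {ξ : diam I_ξ = 0}. -/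
def Sset (a b : ℝ) (fI : ℕ → Set.Icc a b → Set.Icc a b) : Set (ℕ → ℕ) :=
  {ξ | EMetric.diam (Iset a b fI ξ) = 0}

/-- The j-th sliceM of a measure on ℕ × I:  μ_j(C) = μ̂({j} × C). -/
def sliceM (a b : ℝ) (μ : Measure (ℕ × Set.Icc a b)) (k : ℕ) : Measure (Set.Icc a b) :=
  Measure.map Prod.snd (μ.restrict ({k} ×ˢ (Set.univ : Set (Set.Icc a b))))

/-- The Markov operator T:  (Tμ̂)({j}×C) = μ_{j+1}(f_j⁻¹ C) + p_j·μ₀(f_j⁻¹ C). -/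
def TOp (a b : ℝ) (p : ℕ → ℝ) (fI : ℕ → Set.Icc a b → Set.Icc a b)
    (μ : Measure (ℕ × Set.Icc a b)) : Measure (ℕ × Set.Icc a b) :=
  Measure.sum fun j =>
    Measure.map (fun x => (j, fI j x))
      (sliceM a b μ (j + 1) + ENNReal.ofReal (p j) • sliceM a b μ 0)

/-- Extend ξ : Fin n → ℕ to ℕ → ℕ by 0. -/
def padSeq {n : ℕ} (ξ : Fin n → ℕ) : ℕ → ℕ := fun i => if h : i < n then ξ ⟨i, h⟩ else 0

/-- S_nˣ = {ξ : x ∈ I_ξⁿ}. -/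
def SnX (a b : ℝ) (fI : ℕ → Set.Icc a b → Set.Icc a b) (x : Set.Icc a b) (n : ℕ) :
    Set (ℕ → ℕ) :=
  {ξ | x ∈ itf a b fI ξ n '' Set.univ}

/-- Σ_n^W = {ω : σ^{iN}(ω) ∉ W for i = 0,…,n-1}, for W the cylinder [ξ₀,…,ξ_{N-1}]. -/
def SigW (ξ : ℕ → ℕ) (N n : ℕ) : Set (ℕ → ℕ) :=
  {ω | ∀ i < n, ¬ (∀ k < N, ω (i * N + k) = ξ k)}

open Classical in
/-- The block-replacement map H_n: replace every length-N block equal to (ξ₀,…,ξ_{N-1})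
by (η₀,…,η_{N-1}). -/
noncomputable def Hn (ξ η : ℕ → ℕ) (N : ℕ) (c : ℕ → ℕ) : ℕ → ℕ :=
  fun i => if (∀ k < N, c (i / N * N + k) = ξ k) then η (i % N) else c i

/-- The splitting condition. -/
def Splitting (a b : ℝ) (fI : ℕ → Set.Icc a b → Set.Icc a b) (P : Measure (ℕ → ℕ)) : Prop :=
  ∃ (l r : ℕ) (c d : ℕ → ℕ), 1 ≤ l ∧ 1 ≤ r ∧
    0 < P (cyl c l) ∧ 0 < P (cyl d r) ∧ c (l - 1) = d (r - 1) ∧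
    (itfRev a b fI c l '' Set.univ) ∩ (itfRev a b fI d r '' Set.univ) = ∅

/-! `ℙ⁻` is the time reversal of the chain `ℙ`: it climbs `i → i + 1` or jumps to `0`, and
`ℙ⁻[ξ₀, …, ξₙ] ≤ m_{ξₙ}` with `m_i → 0`, so almost every `ω` visits `0` infinitely often.
Reversing the two splitting words and extending them by the descent to `0` gives two
`ℙ⁻`-admissible blocks starting at `0` whose compositions have disjoint images. Whenever `ω` is
at `0`, each block follows with conditional probability at least some `κ > 0`, and as the prefix
map `f_{ω₀} ∘ ⋯` is injective, a fixed point `x` can stay in `I_ωⁿ` after at most one of them.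
Along the greedy sequence of zeros spaced by the block length this gives
`ℙ⁻(x ∈ I_ωⁿ for all n) ≤ (1 - κ)ᵏ` for every `k`. Finally every `I_ωⁿ` is an interval, so if
`I_ω` is not a point, some point of a fixed countable dense set lies in all the `I_ωⁿ`. -/

open Function
open scoped ENNReal

section Chain

variable {p : ℕ → ℝ} {E : ℝ}

lemma tailSum_pos (hp : ∀ n, 0 ≤ p n) (hs : Summable p) (hsupp : ∀ N, ∃ n, N ≤ n ∧ 0 < p n)
    (i : ℕ) : 0 < tailSum p i := by
  obtain ⟨n, hin, hpn⟩ := hsupp i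
  calc 0 < p (i + (n - i)) := by rwa [Nat.add_sub_cancel' hin]
    _ ≤ tailSum p i := (hs.comp_injective (add_right_injective i)).le_tsum _ fun j _ => hp _

lemma mdist_pos (hp : ∀ n, 0 ≤ p n) (hs : Summable p) (hsupp : ∀ N, ∃ n, N ≤ n ∧ 0 < p n)
    (hE : 0 ≤ E) (i : ℕ) : 0 < mdist p E i :=
  div_pos (tailSum_pos hp hs hsupp i) (by linarith)

lemma tendsto_mdist_atTop : Tendsto (mdist p E) atTop (𝓝 0) := by
  have h : Tendsto (fun i => ∑' j, p (i + j)) atTop (𝓝 0) := by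
    simpa only [add_comm] using tendsto_sum_nat_add p
  rw [← zero_div (1 + E)]
  exact h.div_const (1 + E)

lemma Ptrans_nonneg (hp : ∀ n, 0 ≤ p n) (i j : ℕ) : 0 ≤ Ptrans p i j := by
  unfold Ptrans; split_ifs <;> first | exact hp j | norm_num

lemma Ptrans_le_one (hp1 : ∀ n, p n ≤ 1) (i j : ℕ) : Ptrans p i j ≤ 1 := by
  unfold Ptrans; split_ifs <;> first | exact hp1 j | norm_num

lemma Ptrans_succ_self (i : ℕ) : Ptrans p (i + 1) i = 1 := by simp [Ptrans]

lemma qtrans_pos_iff (hm : ∀ i, 0 < mdist p E i) {i j : ℕ} :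
    0 < qtrans p E i j ↔ 0 < Ptrans p j i :=
  mul_pos_iff_of_pos_left (div_pos (hm j) (hm i))

lemma qtrans_nonneg (hm : ∀ i, 0 < mdist p E i) (hp : ∀ n, 0 ≤ p n) (i j : ℕ) :
    0 ≤ qtrans p E i j :=
  mul_nonneg (div_pos (hm j) (hm i)).le (Ptrans_nonneg hp j i)

lemma mdist_mul_qtrans {i : ℕ} (hm : mdist p E i ≠ 0) (j : ℕ) :
    mdist p E i * qtrans p E i j = mdist p E j * Ptrans p j i := by
  rw [qtrans]; field_simp

lemma eq_succ_of_qtrans_ne_zero {i j : ℕ} (h : qtrans p E i j ≠ 0) (hj : j ≠ 0) : j = i + 1 := by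
  by_contra hne
  exact h (by simp [qtrans, Ptrans, hj, hne])

def qWeight (p : ℕ → ℝ) (E : ℝ) (u : ℕ → ℕ) (n : ℕ) : ℝ :=
  ∏ i ∈ Finset.range n, qtrans p E (u i) (u (i + 1))

lemma cylProbQ_succ (ξ : ℕ → ℕ) (n : ℕ) :
    cylProbQ p E ξ (n + 1) = mdist p E (ξ 0) * qWeight p E ξ n := rfl

lemma cylProbQ_nonneg (hm : ∀ i, 0 < mdist p E i) (hp : ∀ n, 0 ≤ p n) (ξ : ℕ → ℕ) (n : ℕ) :
    0 ≤ cylProbQ p E ξ n :=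
  mul_nonneg (hm _).le (Finset.prod_nonneg fun _ _ => qtrans_nonneg hm hp _ _)

lemma cylProbQ_add (ξ : ℕ → ℕ) (j n : ℕ) :
    cylProbQ p E ξ (j + 1 + n) = cylProbQ p E ξ (j + 1) * qWeight p E (fun i => ξ (j + i)) n := by
  rw [show j + 1 + n = j + n + 1 by omega, cylProbQ_succ, cylProbQ_succ, qWeight, qWeight,
    qWeight, Finset.prod_range_add, mul_assoc]
  simp only [add_assoc]

lemma mdist_mul_qWeight (hm : ∀ i, 0 < mdist p E i) (ξ : ℕ → ℕ) (n : ℕ) :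
    mdist p E (ξ 0) * qWeight p E ξ n =
      mdist p E (ξ n) * ∏ i ∈ Finset.range n, Ptrans p (ξ (i + 1)) (ξ i) := by
  induction n with
  | zero => simp [qWeight]
  | succ n ih =>
    rw [qWeight, Finset.prod_range_succ, ← qWeight, ← mul_assoc, ih, Finset.prod_range_succ]
    linear_combination (∏ i ∈ Finset.range n, Ptrans p (ξ (i + 1)) (ξ i)) *
      mdist_mul_qtrans (hm (ξ n)).ne' (ξ (n + 1))

lemma cylProbQ_le_mdist (hm : ∀ i, 0 < mdist p E i) (hp : ∀ n, 0 ≤ p n) (hp1 : ∀ n, p n ≤ 1)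
    (ξ : ℕ → ℕ) (n : ℕ) : cylProbQ p E ξ (n + 1) ≤ mdist p E (ξ n) := by
  rw [cylProbQ_succ, mdist_mul_qWeight hm]
  exact mul_le_of_le_one_right (hm _).le
    (Finset.prod_le_one (fun _ _ => Ptrans_nonneg hp _ _) fun _ _ => Ptrans_le_one hp1 _ _)

end Chain

section Cylinders

lemma mem_cyl_self (ξ : ℕ → ℕ) (n : ℕ) : ξ ∈ cyl ξ n := fun _ _ => rfl

lemma cyl_subset_cyl (ξ : ℕ → ℕ) {m n : ℕ} (h : m ≤ n) : cyl ξ n ⊆ cyl ξ m :=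
  fun _ hω i hi => hω i (hi.trans_le h)

lemma cyl_eq_of_mem {ω ξ : ℕ → ℕ} {n : ℕ} (h : ω ∈ cyl ξ n) : cyl ω n = cyl ξ n := by
  ext η
  exact ⟨fun hη i hi => (hη i hi).trans (h i hi), fun hη i hi => (hη i hi).trans (h i hi).symm⟩

lemma measurableSet_cyl (ξ : ℕ → ℕ) (n : ℕ) : MeasurableSet (cyl ξ n) := by
  have h : cyl ξ n = ⋂ i ∈ Finset.range n, (fun ω : ℕ → ℕ => ω i) ⁻¹' {ξ i} := by
    ext ω; simp [cyl]
  rw [h]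
  exact .biInter (Finset.range n).countable_toSet
    fun i _ => measurable_pi_apply i (measurableSet_singleton _)

lemma countable_range_cyl (n : ℕ) : (range fun ξ : ℕ → ℕ => cyl ξ n).Countable := by
  refine (countable_range fun w : Fin n → ℕ => {ω : ℕ → ℕ | ∀ i : Fin n, ω i = w i}).mono ?_
  rintro _ ⟨ξ, rfl⟩
  exact ⟨fun i => ξ i, by ext ω; simp [cyl, Fin.forall_iff]⟩

lemma ae_measure_cyl_ne_zero (μ : Measure (ℕ → ℕ)) : ∀ᵐ ω ∂μ, ∀ n, μ (cyl ω n) ≠ 0 := by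
  refine ae_all_iff.2 fun n => ae_iff.2 <| measure_mono_null (fun ω hω => ?_)
    ((measure_sUnion_null_iff ((countable_range_cyl n).mono (sep_subset _ _))).2
      fun C (hC : C ∈ {C ∈ range fun ξ => cyl ξ n | μ C = 0}) => hC.2)
  exact ⟨cyl ω n, ⟨⟨ω, rfl⟩, not_not.1 hω⟩, mem_cyl_self ω n⟩

end Cylinders

section Recurrence

variable {p : ℕ → ℝ} {E : ℝ} {Pm : Measure (ℕ → ℕ)}

lemma countable_setOf_forall_succ (m : ℕ) :
    {ω : ℕ → ℕ | ∀ j, m ≤ j → ω (j + 1) = ω j + 1}.Countable := by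
  refine MapsTo.countable_of_injOn (f := fun ω (i : Fin (m + 1)) => ω i) (mapsTo_univ _ _)
    (fun ω hω ω' hω' h => ?_) countable_univ
  have htail : ∀ k, ω (m + k) = ω' (m + k) := by
    intro k
    induction k with
    | zero => simpa using congrFun h (Fin.last m)
    | succ k ih => rw [← add_assoc, hω _ (by omega), hω' _ (by omega), ih]
  funext i
  rcases le_or_gt m i with hi | hi
  · obtain ⟨k, rfl⟩ := Nat.exists_eq_add_of_le hi
    exact htail k
  · exact congrFun h ⟨i, by omega⟩

lemma succ_eq_of_measure_cyl_ne_zero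
    (hPm : ∀ n, 1 ≤ n → ∀ ξ : ℕ → ℕ, Pm (cyl ξ n) = ENNReal.ofReal (cylProbQ p E ξ n))
    {ω : ℕ → ℕ} {j : ℕ} (hω : Pm (cyl ω (j + 2)) ≠ 0) (hj : ω (j + 1) ≠ 0) :
    ω (j + 1) = ω j + 1 := by
  refine eq_succ_of_qtrans_ne_zero (p := p) (E := E) (fun h0 => hω ?_) hj
  rw [hPm _ (by omega), ENNReal.ofReal_eq_zero, cylProbQ_succ, qWeight,
    Finset.prod_eq_zero (Finset.self_mem_range_succ j) h0, mul_zero]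

lemma measure_singleton_eq_zero_of_forall_succ (hm : ∀ i, 0 < mdist p E i)
    (hp : ∀ n, 0 ≤ p n) (hp1 : ∀ n, p n ≤ 1)
    (hPm : ∀ n, 1 ≤ n → ∀ ξ : ℕ → ℕ, Pm (cyl ξ n) = ENNReal.ofReal (cylProbQ p E ξ n))
    {ω : ℕ → ℕ} {m : ℕ} (hω : ∀ j, m ≤ j → ω (j + 1) = ω j + 1) : Pm {ω} = 0 := by
  have hgrow : ∀ k, k ≤ ω (m + k) := by
    intro k
    induction k with
    | zero => exact Nat.zero_le _
    | succ k ih => rw [← add_assoc, hω _ (by omega)]; omega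
  have hlim : Tendsto (fun k => ENNReal.ofReal (mdist p E (ω (m + k)))) atTop (𝓝 0) := by
    rw [← ENNReal.ofReal_zero]
    exact ENNReal.tendsto_ofReal
      (tendsto_mdist_atTop.comp (tendsto_atTop_mono hgrow tendsto_id))
  refine le_antisymm (ge_of_tendsto' hlim fun k => ?_) zero_le
  calc Pm {ω} ≤ Pm (cyl ω (m + k + 1)) := measure_mono (singleton_subset_iff.2 (mem_cyl_self _ _))
    _ ≤ ENNReal.ofReal (mdist p E (ω (m + k))) := by
      rw [hPm _ (by omega)]
      exact ENNReal.ofReal_le_ofReal (cylProbQ_le_mdist hm hp hp1 ω _)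

lemma ae_exists_ge_eq_zero (hm : ∀ i, 0 < mdist p E i) (hp : ∀ n, 0 ≤ p n) (hp1 : ∀ n, p n ≤ 1)
    (hPm : ∀ n, 1 ≤ n → ∀ ξ : ℕ → ℕ, Pm (cyl ξ n) = ENNReal.ofReal (cylProbQ p E ξ n)) :
    ∀ᵐ ω ∂Pm, ∀ m, ∃ j, m ≤ j ∧ ω j = 0 := by
  -- Off null cylinders, a path avoiding `0` from time `m` on climbs by one at each step; there
  -- are countably many such paths, each of measure zero.
  have hescape : Pm {ω | (∀ n, Pm (cyl ω n) ≠ 0) ∧ ∃ m, ∀ j, m ≤ j → ω j ≠ 0} = 0 := by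
    refine measure_mono_null (t := ⋃ m, ⋃ ω ∈ {ω : ℕ → ℕ | ∀ j, m ≤ j → ω (j + 1) = ω j + 1}, {ω})
      ?_ (measure_iUnion_null fun m => (measure_biUnion_null_iff (countable_setOf_forall_succ m)).2
        fun ω hω => measure_singleton_eq_zero_of_forall_succ hm hp hp1 hPm hω)
    rintro ω ⟨hcyl, m, hm0⟩
    exact mem_iUnion.2 ⟨m, mem_biUnion (fun j hj =>
      succ_eq_of_measure_cyl_ne_zero hPm (hcyl _) (hm0 _ (by omega))) rfl⟩
  filter_upwards [ae_measure_cyl_ne_zero Pm, measure_eq_zero_iff_ae_notMem.1 hescape]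
    with ω hcyl hω m
  by_contra! h
  exact hω ⟨hcyl, m, h⟩

end Recurrence

section Compositions

variable {a b : ℝ} {F : ℕ → Icc a b → Icc a b}

lemma itf_congr {ω ξ : ℕ → ℕ} {n : ℕ} (h : ω ∈ cyl ξ n) : itf a b F ω n = itf a b F ξ n := by
  induction n with
  | zero => rfl
  | succ n ih =>
    funext x
    show itf a b F ω n (F (ω n) x) = itf a b F ξ n (F (ξ n) x)
    rw [h n n.lt_succ_self, ih (cyl_subset_cyl ξ n.le_succ h)]

lemma itf_add (ω : ℕ → ℕ) (m k : ℕ) :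
    itf a b F ω (m + k) = itf a b F ω m ∘ itf a b F (fun i => ω (m + i)) k := by
  induction k with
  | zero => rfl
  | succ k ih =>
    funext x
    show itf a b F ω (m + k) (F (ω (m + k)) x) = _
    rw [ih]
    rfl

lemma itf_reverse (w : ℕ → ℕ) (n : ℕ) :
    itf a b F (fun i => w (n - 1 - i)) n = itfRev a b F w n := by
  induction n with
  | zero => rfl
  | succ n ih =>
    rw [add_comm n 1, itf_add, ← add_comm n 1,
      itf_congr (ω := fun i => w (n + 1 - 1 - (1 + i))) (ξ := fun i => w (n - 1 - i))
        fun i _ => by simp only; congr 1; omega, ih]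
    rfl

lemma itf_injective (hF : ∀ k, Injective (F k)) (ω : ℕ → ℕ) (n : ℕ) :
    Injective (itf a b F ω n) := by
  induction n with
  | zero => exact injective_id
  | succ n ih => exact ih.comp (hF _)

lemma itf_continuous (hF : ∀ k, Continuous (F k)) (ω : ℕ → ℕ) (n : ℕ) :
    Continuous (itf a b F ω n) := by
  induction n with
  | zero => exact continuous_id
  | succ n ih => exact ih.comp (hF _)

lemma range_itf_antitone (ω : ℕ → ℕ) : Antitone fun n => range (itf a b F ω n) := by
  intro m n h
  obtain ⟨k, rfl⟩ := Nat.exists_eq_add_of_le h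
  simp only [itf_add, range_comp_subset_range]

lemma range_itf_of_block {ω u : ℕ → ℕ} {j n : ℕ} (h : ∀ i < n, ω (j + i) = u i) :
    range (itf a b F ω (j + n)) = itf a b F ω j '' range (itf a b F u n) := by
  rw [itf_add, range_comp, itf_congr (ξ := u) h]

end Compositions

section Splice

variable {p : ℕ → ℝ} {E : ℝ} {Pm : Measure (ℕ → ℕ)}

def splice (ξ : ℕ → ℕ) (j : ℕ) (u : ℕ → ℕ) : ℕ → ℕ := fun i => if i < j then ξ i else u (i - j)

lemma splice_add (ξ : ℕ → ℕ) (j : ℕ) (u : ℕ → ℕ) (i : ℕ) : splice ξ j u (j + i) = u i := by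
  simp [splice]

lemma splice_mem_cyl {ξ u : ℕ → ℕ} {j : ℕ} (hu : u 0 = ξ j) : splice ξ j u ∈ cyl ξ (j + 1) := by
  intro i hi
  rcases Nat.lt_succ_iff_lt_or_eq.1 hi with hi | rfl
  · simp [splice, hi]
  · simpa using splice_add ξ i u 0 |>.trans hu

lemma measure_cyl_splice (hm : ∀ i, 0 < mdist p E i) (hp : ∀ n, 0 ≤ p n)
    (hPm : ∀ n, 1 ≤ n → ∀ ξ : ℕ → ℕ, Pm (cyl ξ n) = ENNReal.ofReal (cylProbQ p E ξ n))
    {ξ u : ℕ → ℕ} {j : ℕ} (hu : u 0 = ξ j) (n : ℕ) :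
    Pm (cyl (splice ξ j u) (j + 1 + n)) =
      Pm (cyl ξ (j + 1)) * ENNReal.ofReal (qWeight p E u n) := by
  rw [hPm _ (by omega), cylProbQ_add, ENNReal.ofReal_mul (cylProbQ_nonneg hm hp _ _),
    ← hPm _ (by omega), cyl_eq_of_mem (splice_mem_cyl hu)]
  simp only [splice_add]

end Splice

section MeasureBounds

variable {α : Type*} [MeasurableSpace α] {μ : Measure α}

lemma measure_inter_le_one_sub_mul {A B C : Set α} {κ : ℝ≥0∞} (hBC : B ⊆ C)
    (hB : MeasurableSet B) (hC : μ C ≠ ∞) (hκ : κ * μ C ≤ μ B) (hAB : Disjoint A B) :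
    μ (A ∩ C) ≤ (1 - κ) * μ C :=
  calc μ (A ∩ C) ≤ μ (C \ B) :=
        measure_mono fun _ hω => ⟨hω.2, hAB.notMem_of_mem_left hω.1⟩
    _ = μ C - μ B := measure_sdiff hBC hB.nullMeasurableSet (ne_top_of_le_ne_top hC
        (measure_mono hBC))
    _ ≤ μ C - κ * μ C := tsub_le_tsub_left hκ _
    _ = (1 - κ) * μ C := by rw [ENNReal.sub_mul fun _ _ => hC, one_mul]

lemma measure_le_mul_of_subset_sUnion {A B : Set α} {𝒞 : Set (Set α)} {ρ : ℝ≥0∞}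
    (hc : 𝒞.Countable) (hd : 𝒞.Pairwise Disjoint) (hm : ∀ C ∈ 𝒞, MeasurableSet C)
    (hA : A ⊆ ⋃₀ 𝒞) (hB : ∀ C ∈ 𝒞, C ⊆ B) (h : ∀ C ∈ 𝒞, μ (A ∩ C) ≤ ρ * μ C) :
    μ A ≤ ρ * μ B :=
  calc μ A ≤ μ (⋃ C ∈ 𝒞, A ∩ C) := measure_mono fun ω hω => by
        obtain ⟨C, hC, hωC⟩ := hA hω
        exact mem_biUnion hC ⟨hω, hωC⟩
    _ ≤ ∑' C : 𝒞, μ (A ∩ C) := measure_biUnion_le μ hc _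
    _ ≤ ∑' C : 𝒞, ρ * μ C := ENNReal.tsum_le_tsum fun C => h C C.2
    _ = ρ * μ (⋃₀ 𝒞) := by rw [ENNReal.tsum_mul_left, measure_sUnion hc hd hm]
    _ ≤ ρ * μ B := by gcongr; exact sUnion_subset hB

end MeasureBounds

/-- The splitting condition for `ℙ⁻`: two admissible blocks `u₀ … u_{lu}` and `v₀ … v_{lv}`
leaving `0` whose compositions have disjoint images. -/
structure ReverseSplitting (a b : ℝ) (F : ℕ → Icc a b → Icc a b) (p : ℕ → ℝ) (E : ℝ) where
  u : ℕ → ℕ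
  v : ℕ → ℕ
  lu : ℕ
  lv : ℕ
  u_zero : u 0 = 0
  v_zero : v 0 = 0
  qWeight_u_pos : 0 < qWeight p E u lu
  qWeight_v_pos : 0 < qWeight p E v lv
  disjoint : Disjoint (range (itf a b F u (lu + 1))) (range (itf a b F v (lv + 1)))

namespace ReverseSplitting

variable {a b : ℝ} {F : ℕ → Icc a b → Icc a b} {p : ℕ → ℝ} {E : ℝ}

def weight (S : ReverseSplitting a b F p E) : ℝ≥0∞ :=
  ENNReal.ofReal (min (qWeight p E S.u S.lu) (qWeight p E S.v S.lv))

def span (S : ReverseSplitting a b F p E) : ℕ := max S.lu S.lv + 1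

lemma weight_ne_zero (S : ReverseSplitting a b F p E) : S.weight ≠ 0 :=
  (ENNReal.ofReal_pos.2 (lt_min S.qWeight_u_pos S.qWeight_v_pos)).ne'

end ReverseSplitting

section Survival

variable {a b : ℝ} {F : ℕ → Icc a b → Icc a b} {p : ℕ → ℝ} {E : ℝ} {Pm : Measure (ℕ → ℕ)}
  [IsFiniteMeasure Pm]

/-- The continuation of `ξ₀ … ξⱼ` by the block `u` takes a share `qWeight u n ≥ κ` of the
cylinder and, by `hx`, lies outside the event. -/
lemma measure_cyl_inter_survival_le_of_block (hm : ∀ i, 0 < mdist p E i) (hp : ∀ n, 0 ≤ p n)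
    (hPm : ∀ n, 1 ≤ n → ∀ ξ : ℕ → ℕ, Pm (cyl ξ n) = ENNReal.ofReal (cylProbQ p E ξ n))
    {ξ u : ℕ → ℕ} {j n L : ℕ} {x : Icc a b} {κ : ℝ≥0∞} (hu : u 0 = ξ j) (hnL : n + 1 ≤ L)
    (hκ : κ ≤ ENNReal.ofReal (qWeight p E u n))
    (hx : x ∉ itf a b F ξ j '' range (itf a b F u (n + 1))) :
    Pm (cyl ξ (j + 1) ∩ {ω | x ∈ range (itf a b F ω (j + L))}) ≤
      (1 - κ) * Pm (cyl ξ (j + 1)) := by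
  have hsub : cyl (splice ξ j u) (j + 1 + n) ⊆ cyl ξ (j + 1) := by
    rw [← cyl_eq_of_mem (splice_mem_cyl hu)]
    exact cyl_subset_cyl _ (by omega)
  rw [inter_comm]
  refine measure_inter_le_one_sub_mul hsub (measurableSet_cyl _ _) (measure_ne_top _ _) ?_ ?_
  · rw [measure_cyl_splice hm hp hPm hu, mul_comm]
    gcongr
  · refine disjoint_left.2 fun ω hωx hω => hx ?_
    have hblock : ∀ i < n + 1, ω (j + i) = u i := fun i hi => by
      rw [hω (j + i) (by omega), splice_add]
    rw [← itf_congr (cyl_subset_cyl _ j.le_succ (hsub hω)), ← range_itf_of_block hblock]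
    exact range_itf_antitone ω (by omega) hωx

lemma ReverseSplitting.measure_cyl_inter_survival_le (S : ReverseSplitting a b F p E)
    (hF : ∀ k, Injective (F k)) (hm : ∀ i, 0 < mdist p E i) (hp : ∀ n, 0 ≤ p n)
    (hPm : ∀ n, 1 ≤ n → ∀ ξ : ℕ → ℕ, Pm (cyl ξ n) = ENNReal.ofReal (cylProbQ p E ξ n))
    {ξ : ℕ → ℕ} {j L : ℕ} (x : Icc a b) (hξ : ξ j = 0) (hL : S.span ≤ L) :
    Pm (cyl ξ (j + 1) ∩ {ω | x ∈ range (itf a b F ω (j + L))}) ≤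
      (1 - S.weight) * Pm (cyl ξ (j + 1)) := by
  have hspan : S.lu + 1 ≤ L ∧ S.lv + 1 ≤ L := by
    simp only [ReverseSplitting.span] at hL; omega
  by_cases hx : x ∈ itf a b F ξ j '' range (itf a b F S.u (S.lu + 1))
  · refine measure_cyl_inter_survival_le_of_block hm hp hPm (S.v_zero.trans hξ.symm) hspan.2
      (ENNReal.ofReal_le_ofReal (min_le_right _ _)) fun hx' => ?_
    exact ((disjoint_image_iff (itf_injective hF ξ j)).2 S.disjoint).notMem_of_mem_left hx hx'
  · exact measure_cyl_inter_survival_le_of_block hm hp hPm (S.u_zero.trans hξ.symm) hspan.1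
      (ENNReal.ofReal_le_ofReal (min_le_left _ _)) hx

end Survival

section Renewal

def IsFirstZeroFrom (ω : ℕ → ℕ) (s j : ℕ) : Prop :=
  s ≤ j ∧ ω j = 0 ∧ ∀ i, s ≤ i → i < j → ω i ≠ 0

def IsRenewalTime (L : ℕ) (ω : ℕ → ℕ) : ℕ → ℕ → Prop
  | 0, j => IsFirstZeroFrom ω 0 j
  | k + 1, j => ∃ j', IsRenewalTime L ω k j' ∧ IsFirstZeroFrom ω (j' + L) j

variable {L : ℕ} {ω ξ : ℕ → ℕ}

lemma IsFirstZeroFrom.unique {s j j' : ℕ} (h : IsFirstZeroFrom ω s j)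
    (h' : IsFirstZeroFrom ω s j') : j = j' := by
  by_contra hne
  rcases Nat.lt_or_gt_of_ne hne with hlt | hlt
  · exact h'.2.2 j h.1 hlt h.2.1
  · exact h.2.2 j' h'.1 hlt h'.2.1

lemma IsFirstZeroFrom.of_mem_cyl {s j : ℕ} (h : IsFirstZeroFrom ξ s j) (hω : ω ∈ cyl ξ (j + 1)) :
    IsFirstZeroFrom ω s j :=
  ⟨h.1, (hω j j.lt_succ_self).trans h.2.1,
    fun i hs hi => (hω i (by omega)).trans_ne (h.2.2 i hs hi)⟩

lemma exists_isFirstZeroFrom {s : ℕ} (h : ∃ j, s ≤ j ∧ ω j = 0) : ∃ j, IsFirstZeroFrom ω s j := by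
  classical
  exact ⟨Nat.find h, (Nat.find_spec h).1, (Nat.find_spec h).2,
    fun i hs hi h0 => Nat.find_min h hi ⟨hs, h0⟩⟩

lemma IsRenewalTime.eq_zero {k j : ℕ} (h : IsRenewalTime L ω k j) : ω j = 0 := by
  cases k with
  | zero => exact h.2.1
  | succ k => exact h.choose_spec.2.2.1

lemma IsRenewalTime.unique {k j j' : ℕ} (h : IsRenewalTime L ω k j)
    (h' : IsRenewalTime L ω k j') : j = j' := by
  induction k generalizing j j' with
  | zero => exact IsFirstZeroFrom.unique h h'
  | succ k ih =>
    obtain ⟨i, hi, hj⟩ := h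
    obtain ⟨i', hi', hj'⟩ := h'
    rw [ih hi hi'] at hj
    exact hj.unique hj'

lemma IsRenewalTime.of_mem_cyl {k j : ℕ} (h : IsRenewalTime L ξ k j) (hω : ω ∈ cyl ξ (j + 1)) :
    IsRenewalTime L ω k j := by
  induction k generalizing j with
  | zero => exact IsFirstZeroFrom.of_mem_cyl h hω
  | succ k ih =>
    obtain ⟨i, hi, hj⟩ := h
    have hiL : i + L ≤ j := hj.1
    exact ⟨i, ih hi (cyl_subset_cyl ξ (by omega) hω), hj.of_mem_cyl hω⟩

lemma exists_isRenewalTime (h : ∀ m, ∃ j, m ≤ j ∧ ω j = 0) (k : ℕ) :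
    ∃ j, IsRenewalTime L ω k j := by
  induction k with
  | zero => exact exists_isFirstZeroFrom (h 0)
  | succ k ih =>
    obtain ⟨i, hi⟩ := ih
    obtain ⟨j, hj⟩ := exists_isFirstZeroFrom (h (i + L))
    exact ⟨j, i, hi, hj⟩

def renewalCyls (L k : ℕ) : Set (Set (ℕ → ℕ)) :=
  {C | ∃ ω j, IsRenewalTime L ω k j ∧ C = cyl ω (j + 1)}

lemma renewalCyls_countable (L k : ℕ) : (renewalCyls L k).Countable := by
  refine (countable_iUnion fun j => countable_range_cyl (j + 1)).mono ?_
  rintro _ ⟨ω, j, -, rfl⟩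
  exact mem_iUnion.2 ⟨j, ω, rfl⟩

lemma renewalCyls_pairwise_disjoint (L k : ℕ) : (renewalCyls L k).Pairwise Disjoint := by
  rintro _ ⟨ω, j, hj, rfl⟩ _ ⟨ω', j', hj', rfl⟩ hne
  by_contra hnd
  obtain ⟨η, hη, hη'⟩ := not_disjoint_iff.1 hnd
  obtain rfl := (hj.of_mem_cyl hη).unique (hj'.of_mem_cyl hη')
  exact hne ((cyl_eq_of_mem hη).symm.trans (cyl_eq_of_mem hη'))

end Renewal

section Decay

variable {a b : ℝ} {F : ℕ → Icc a b → Icc a b} {p : ℕ → ℝ} {E : ℝ} {Pm : Measure (ℕ → ℕ)}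

def renewalSurvival (a b : ℝ) (F : ℕ → Icc a b → Icc a b) (L : ℕ) (x : Icc a b) (k : ℕ) :
    Set (ℕ → ℕ) :=
  {ω | ∃ j, IsRenewalTime L ω k j ∧ x ∈ range (itf a b F ω (j + L))}

lemma ReverseSplitting.measure_renewalSurvival_succ_le [IsFiniteMeasure Pm]
    (S : ReverseSplitting a b F p E) (hF : ∀ k, Injective (F k)) (hm : ∀ i, 0 < mdist p E i)
    (hp : ∀ n, 0 ≤ p n)
    (hPm : ∀ n, 1 ≤ n → ∀ ξ : ℕ → ℕ, Pm (cyl ξ n) = ENNReal.ofReal (cylProbQ p E ξ n))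
    {L : ℕ} (hL : S.span ≤ L) (x : Icc a b) (k : ℕ) :
    Pm (renewalSurvival a b F L x (k + 1)) ≤
      (1 - S.weight) * Pm (renewalSurvival a b F L x k) := by
  -- Decompose along the prefixes up to the `(k+1)`-st renewal time: each ends in `0` and
  -- already decides membership in the `k`-th survival set.
  refine measure_le_mul_of_subset_sUnion
    (𝒞 := {C ∈ renewalCyls L (k + 1) | C ⊆ renewalSurvival a b F L x k})
    ((renewalCyls_countable L (k + 1)).mono (sep_subset _ _))
    ((renewalCyls_pairwise_disjoint L (k + 1)).mono (sep_subset _ _)) ?_ ?_ (fun C hC => hC.2) ?_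
  · rintro _ ⟨⟨ω, j, -, rfl⟩, -⟩
    exact measurableSet_cyl _ _
  · rintro ω ⟨j, hj, hx⟩
    refine ⟨cyl ω (j + 1), ⟨⟨ω, j, hj, rfl⟩, fun η hη => ?_⟩, mem_cyl_self ω _⟩
    obtain ⟨i, hi, hij⟩ := hj
    have hiL : i + L ≤ j := hij.1
    refine ⟨i, hi.of_mem_cyl (cyl_subset_cyl ω (by omega) hη), ?_⟩
    rw [itf_congr (cyl_subset_cyl ω (by omega) hη)]
    exact range_itf_antitone ω (by omega) hx
  · rintro _ ⟨⟨ω, j, hj, rfl⟩, -⟩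
    refine (measure_mono ?_).trans (S.measure_cyl_inter_survival_le hF hm hp hPm x hj.eq_zero hL)
    rintro η ⟨⟨j', hj', hx⟩, hη⟩
    rw [← (hj.of_mem_cyl hη).unique hj'] at hx
    exact ⟨hη, hx⟩

lemma ReverseSplitting.measure_renewalSurvival_le [IsProbabilityMeasure Pm]
    (S : ReverseSplitting a b F p E) (hF : ∀ k, Injective (F k)) (hm : ∀ i, 0 < mdist p E i)
    (hp : ∀ n, 0 ≤ p n)
    (hPm : ∀ n, 1 ≤ n → ∀ ξ : ℕ → ℕ, Pm (cyl ξ n) = ENNReal.ofReal (cylProbQ p E ξ n))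
    {L : ℕ} (hL : S.span ≤ L) (x : Icc a b) (k : ℕ) :
    Pm (renewalSurvival a b F L x k) ≤ (1 - S.weight) ^ k := by
  induction k with
  | zero => simpa using prob_le_one
  | succ k ih =>
    calc Pm (renewalSurvival a b F L x (k + 1))
        ≤ (1 - S.weight) * Pm (renewalSurvival a b F L x k) :=
          S.measure_renewalSurvival_succ_le hF hm hp hPm hL x k
      _ ≤ (1 - S.weight) * (1 - S.weight) ^ k := by gcongr
      _ = (1 - S.weight) ^ (k + 1) := (pow_succ' _ _).symm

lemma ReverseSplitting.measure_survival_eq_zero [IsProbabilityMeasure Pm]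
    (S : ReverseSplitting a b F p E) (hF : ∀ k, Injective (F k)) (hm : ∀ i, 0 < mdist p E i)
    (hp : ∀ n, 0 ≤ p n) (hp1 : ∀ n, p n ≤ 1)
    (hPm : ∀ n, 1 ≤ n → ∀ ξ : ℕ → ℕ, Pm (cyl ξ n) = ENNReal.ofReal (cylProbQ p E ξ n))
    (x : Icc a b) : Pm {ω | ∀ n, x ∈ range (itf a b F ω n)} = 0 := by
  have hρ : 1 - S.weight < 1 :=
    ENNReal.sub_lt_self ENNReal.one_ne_top one_ne_zero S.weight_ne_zero
  refine le_antisymm (ge_of_tendsto' (ENNReal.tendsto_pow_atTop_nhds_zero_of_lt_one hρ)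
    fun k => le_trans (measure_mono_ae ?_) (S.measure_renewalSurvival_le hF hm hp hPm le_rfl x k))
    zero_le
  filter_upwards [ae_exists_ge_eq_zero hm hp hp1 hPm] with ω hz hω
  obtain ⟨j, hj⟩ := exists_isRenewalTime hz k
  exact ⟨j, hj, hω _⟩

end Decay

section FromSplitting

variable {a b : ℝ} {F : ℕ → Icc a b → Icc a b} {p : ℕ → ℝ} {E : ℝ}

/-- The word `0, 1, …, s - 1, c_{l-1}, …, c₀`: for `c_{l-1} = s` it is the reversal of `c`
followed by the descent `s - 1, …, 0` of the forward chain. -/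
def zeroReversal (c : ℕ → ℕ) (l s : ℕ) : ℕ → ℕ := fun i => if i < s then i else c (l + s - 1 - i)

lemma zeroReversal_zero {c : ℕ → ℕ} {l s : ℕ} (hcs : c (l - 1) = s) : zeroReversal c l s 0 = 0 := by
  rcases Nat.eq_zero_or_pos s with rfl | hs
  · simpa [zeroReversal] using hcs
  · simp [zeroReversal, hs]

lemma range_itf_zeroReversal (c : ℕ → ℕ) {l : ℕ} (hl : 1 ≤ l) (s : ℕ) :
    range (itf a b F (zeroReversal c l s) (l + s - 1 + 1)) =
      itf a b F (fun i => i) s '' range (itfRev a b F c l) := by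
  rw [show l + s - 1 + 1 = s + l by omega, range_itf_of_block (u := fun i => c (l - 1 - i)),
    itf_reverse, itf_congr (ω := zeroReversal c l s) (ξ := fun i => i) fun i hi => if_pos hi]
  intro i _
  simp only [zeroReversal, if_neg (Nat.not_lt.2 (Nat.le_add_right s i))]
  congr 1
  omega

lemma Ptrans_pos_of_cylProbP_pos (hp : ∀ n, 0 ≤ p n) {c : ℕ → ℕ} {l : ℕ}
    (h : 0 < cylProbP p E c l) {i : ℕ} (hi : i + 1 < l) : 0 < Ptrans p (c i) (c (i + 1)) := by
  refine (Ptrans_nonneg hp _ _).lt_of_ne' fun h0 => h.ne' ?_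
  rw [cylProbP, Finset.prod_eq_zero (f := fun i => Ptrans p (c i) (c (i + 1)))
    (Finset.mem_range.2 (by omega)) h0, mul_zero]

lemma qWeight_zeroReversal_pos (hm : ∀ i, 0 < mdist p E i) {c : ℕ → ℕ} {l s : ℕ}
    (hcs : c (l - 1) = s) (hc : ∀ i, i + 1 < l → 0 < Ptrans p (c i) (c (i + 1))) :
    0 < qWeight p E (zeroReversal c l s) (l + s - 1) := by
  refine Finset.prod_pos fun i hi => (qtrans_pos_iff hm).2 ?_
  rw [Finset.mem_range] at hi
  simp only [zeroReversal]
  split_ifs with h1 h2 h2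
  · exact Ptrans_succ_self i ▸ one_pos
  · omega
  · obtain rfl : s = i + 1 := by omega
    rw [show l + (i + 1) - 1 - (i + 1) = l - 1 by omega, hcs]
    exact Ptrans_succ_self i ▸ one_pos
  · have := hc (l + s - 1 - (i + 1)) (by omega)
    rwa [show l + s - 1 - (i + 1) + 1 = l + s - 1 - i by omega] at this

lemma Splitting.nonempty_reverseSplitting {Pp : Measure (ℕ → ℕ)} (hF : ∀ k, Injective (F k))
    (hm : ∀ i, 0 < mdist p E i) (hp : ∀ n, 0 ≤ p n)
    (hPp : ∀ n, 1 ≤ n → ∀ ξ : ℕ → ℕ, Pp (cyl ξ n) = ENNReal.ofReal (cylProbP p E ξ n))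
    (h : Splitting a b F Pp) : Nonempty (ReverseSplitting a b F p E) := by
  obtain ⟨l, r, c, d, hl, hr, hPc, hPd, hcd, hdisj⟩ := h
  rw [hPp l hl, ENNReal.ofReal_pos] at hPc
  rw [hPp r hr, ENNReal.ofReal_pos] at hPd
  refine ⟨⟨zeroReversal c l (c (l - 1)), zeroReversal d r (c (l - 1)), l + c (l - 1) - 1,
    r + c (l - 1) - 1, zeroReversal_zero rfl, zeroReversal_zero hcd.symm,
    qWeight_zeroReversal_pos hm rfl fun i hi => Ptrans_pos_of_cylProbP_pos hp hPc hi,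
    qWeight_zeroReversal_pos hm hcd.symm fun i hi => Ptrans_pos_of_cylProbP_pos hp hPd hi, ?_⟩⟩
  rw [range_itf_zeroReversal c hl, range_itf_zeroReversal d hr,
    disjoint_image_iff (itf_injective hF _ _), disjoint_iff_inter_eq_empty]
  simpa only [image_univ] using hdisj

end FromSplitting

lemma compl_Sset_subset_biUnion_survival {a b : ℝ} {F : ℕ → Icc a b → Icc a b}
    (hF : ∀ k, Continuous (F k)) {D : Set (Icc a b)} (hD : Dense D) :
    (Sset a b F)ᶜ ⊆ ⋃ x ∈ D, {ω | ∀ n, x ∈ range (itf a b F ω n)} := by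
  have : PreconnectedSpace (Icc a b) := Subtype.preconnectedSpace isPreconnected_Icc
  intro ω hω
  obtain ⟨y, hy, z, hz, hyz⟩ := not_subsingleton_iff.1 (mt Metric.ediam_eq_zero_iff.2 hω)
  wlog hlt : y < z generalizing y z
  · exact this z hz y hy hyz.symm (lt_of_le_of_ne (not_lt.1 hlt) hyz.symm)
  obtain ⟨x, hxD, hx⟩ := hD.exists_between hlt
  refine mem_biUnion hxD fun n => ?_
  cases n with
  | zero => exact ⟨x, rfl⟩
  | succ n =>
    have hJ : ∀ t ∈ Iset a b F ω, t ∈ range (itf a b F ω (n + 1)) := fun t ht => by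
      simpa only [image_univ] using mem_iInter.1 ht n
    exact (isPreconnected_range (itf_continuous hF ω (n + 1))).Icc_subset (hJ y hy) (hJ z hz)
      (Ioo_subset_Icc_self hx)

theorem stmt4_general (a b : ℝ)
    (f g : Set.Icc a b → Set.Icc a b) (hfc : Continuous f) (hgc : Continuous g)
    (hfi : Function.Injective f) (hgi : Function.Injective g)
    (p : ℕ → ℝ) (E : ℝ)
    (hp : ∀ n, 0 ≤ p n) (hp1 : HasSum p 1)
    (hE : E = ∑' n : ℕ, (n : ℝ) * p n)
    (hsupp : ∀ N : ℕ, ∃ n, N ≤ n ∧ 0 < p n)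
    (Pm : Measure (ℕ → ℕ)) [IsProbabilityMeasure Pm]
    (hPm : ∀ n, 1 ≤ n → ∀ ξ : ℕ → ℕ, Pm (cyl ξ n) = ENNReal.ofReal (cylProbQ p E ξ n))
    (Pp : Measure (ℕ → ℕ))
    (hPp : ∀ n, 1 ≤ n → ∀ ξ : ℕ → ℕ, Pp (cyl ξ n) = ENNReal.ofReal (cylProbP p E ξ n))
    (hsplit : Splitting a b (fseq a b g f) Pp) :
    Pm (Sset a b (fseq a b g f)) = 1 := by
  have hF : ∀ k, Injective (fseq a b g f k) := fun k => by
    unfold fseq; split_ifs; exacts [hgi, hfi]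
  have hFc : ∀ k, Continuous (fseq a b g f k) := fun k => by
    unfold fseq; split_ifs; exacts [hgc, hfc]
  have hm : ∀ i, 0 < mdist p E i := mdist_pos hp hp1.summable hsupp
    (hE ▸ tsum_nonneg fun n => mul_nonneg n.cast_nonneg (hp n))
  obtain ⟨S⟩ := hsplit.nonempty_reverseSplitting hF hm hp hPp
  obtain ⟨D, hDc, hD⟩ := TopologicalSpace.exists_countable_dense (Icc a b)
  have hcompl : Pm (Sset a b (fseq a b g f))ᶜ = 0 :=
    measure_mono_null (compl_Sset_subset_biUnion_survival hFc hD) <|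
      (measure_biUnion_null_iff hDc).2 fun x _ =>
        S.measure_survival_eq_zero hF hm hp (fun n => le_hasSum hp1 n fun j _ => hp j) hPm x
  refine le_antisymm prob_le_one ?_
  simpa [hcompl] using measure_univ_le_add_compl (μ := Pm) (Sset a b (fseq a b g f))

/-- Theorem 3: if f and g are injective and the splitting condition is
satisfied, then ℙ⁻(S) = 1. -/
theorem stmt4 (a b : ℝ) (hab : a < b)
    (f g : Set.Icc a b → Set.Icc a b) (hfc : Continuous f) (hgc : Continuous g)
    (hfi : Function.Injective f) (hgi : Function.Injective g)
    (p : ℕ → ℝ) (E : ℝ)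
    (hp : ∀ n, 0 ≤ p n) (hp1 : HasSum p 1) (hp0 : 0 < p 0)
    (hmean : Summable fun n : ℕ => (n : ℝ) * p n)
    (hE : E = ∑' n : ℕ, (n : ℝ) * p n)
    (hsupp : ∀ N : ℕ, ∃ n, N ≤ n ∧ 0 < p n)
    (Pm : Measure (ℕ → ℕ)) [IsProbabilityMeasure Pm]
    (hPm : ∀ n, 1 ≤ n → ∀ ξ : ℕ → ℕ, Pm (cyl ξ n) = ENNReal.ofReal (cylProbQ p E ξ n))
    (Pp : Measure (ℕ → ℕ)) [IsProbabilityMeasure Pp]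
    (hPp : ∀ n, 1 ≤ n → ∀ ξ : ℕ → ℕ, Pp (cyl ξ n) = ENNReal.ofReal (cylProbP p E ξ n))
    (hsplit : Splitting a b (fseq a b g f) Pp) :
    Pm (Sset a b (fseq a b g f)) = 1 :=
  stmt4_general a b f g hfc hgc hfi hgi p E hp hp1 hE hsupp Pm hPm Pp hPp hsplit

end
end

section
/- Lemma 3: For every continuous bounded function ĥ : M̂ → ℝ, every probability measure μ̂ on (M̂, Ŝ), and every ε > 0, there exist integers N and M such that |∑_{j≥M} ∫_{[j]} (h_j∘π) dℙ⁻| < ε and |∑_{j≥M} ∫_I h_j d(Tⁿμ̂)_j| < ε for all n ≥ N, where h_j(x) := ĥ(j,x) and [j] := {ω ∈ Σ : ω₀ = j}. -/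
open MeasureTheory Filter Topology Set
open scoped BigOperators

noncomputable section

/-! The integrals are bounded by `C` times the masses `(Tⁿμ̂)_k(I)` of the levels `k`, so only
these masses matter. Mass at level `k` either comes down from level `k + 1` or is renewed from
level `0` with weight `p_k`, hence `(Tⁿ⁺¹μ̂)_k(I) ≤ (Tⁿμ̂)_{k+1}(I) + p_k`, and iterating gives,
uniformly in `n`,
`∑_{j ≥ M} (Tⁿμ̂)_j(I) ≤ ∑_{j ≥ M} μ_j(I) + ∑_{i ≥ M} ∑_{j ≥ i} p_j`.
The right-hand side tends to `0` as `M → ∞` because `∑_i ∑_{j ≥ i} p_j = ∑_n (n + 1) p_n = 1 + E`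
is finite; on the `ℙ⁻` side the tail is that of the convergent series `∑_k ℙ⁻[k] = 1`. -/

open scoped ENNReal

theorem MeasureTheory.Measure.map_apply_le {α β : Type*} [MeasurableSpace α] [MeasurableSpace β]
    (μ : Measure α) (f : α → β) {s : Set β} (hs : MeasurableSet s) :
    μ.map f s ≤ μ (f ⁻¹' s) := by
  by_cases hf : AEMeasurable f μ
  · exact (Measure.map_apply_of_aemeasurable hf hs).le
  · simp [Measure.map_of_not_aemeasurable hf]

theorem MeasureTheory.tsum_measure_preimage_singleton_le {α β : Type*} [MeasurableSpace α]
    [MeasurableSpace β] [MeasurableSingletonClass β] (μ : Measure α) {X : α → β}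
    (hX : Measurable X) : ∑' k, μ (X ⁻¹' {k}) ≤ μ univ :=
  (tsum_meas_le_meas_iUnion_of_disjoint μ (fun k => hX (measurableSet_singleton k))
    fun _ _ hij => (disjoint_singleton.mpr hij).preimage X).trans (measure_mono (subset_univ _))

namespace ENNReal

theorem tendsto_tsum_add_atTop_zero (f : ℕ → ℝ≥0∞) (hf : ∑' i, f i ≠ ∞) :
    Tendsto (fun M => ∑' j, f (M + j)) atTop (𝓝 0) := by
  simpa only [add_comm] using ENNReal.tendsto_sum_nat_add f hf

theorem tsum_tsum_add_eq (q : ℕ → ℝ≥0∞) :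
    ∑' i, ∑' j, q (i + j) = ∑' n, (n + 1) * q n := by
  rw [← ENNReal.tsum_prod, ← (Finset.HasAntidiagonal.sigmaAntidiagonalEquivProd).tsum_eq,
    ENNReal.tsum_sigma']
  refine tsum_congr fun n => ?_
  have hq : ∀ x : Finset.HasAntidiagonal.antidiagonal n, q (x.1.1 + x.1.2) = q n := fun x => by
    rw [Finset.HasAntidiagonal.mem_antidiagonal.mp x.2]
  simp only [Finset.HasAntidiagonal.sigmaAntidiagonalEquivProd_apply, hq, ENNReal.tsum_const,
    ENat.card_eq_coe_fintype_card, Fintype.card_coe, Finset.Nat.card_antidiagonal]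
  norm_cast

theorem tsum_tail_le_of_renewal {s : ℕ → ℕ → ℝ≥0∞} {q : ℕ → ℝ≥0∞}
    (hrec : ∀ n k, s (n + 1) k ≤ s n (k + 1) + q k * s n 0) (hs0 : ∀ n, s n 0 ≤ 1)
    (n M : ℕ) :
    ∑' j, s n (M + j) ≤ ∑' j, s 0 (M + j) + ∑' i, ∑' j, q (M + i + j) := by
  induction n generalizing M with
  | zero => exact le_self_add
  | succ n ih =>
    calc ∑' j, s (n + 1) (M + j)
        ≤ ∑' j, (s n (M + 1 + j) + q (M + j) * s n 0) :=
          ENNReal.tsum_le_tsum fun j => by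
            simpa only [add_right_comm M j 1] using hrec n (M + j)
      _ ≤ ∑' j, s n (M + 1 + j) + ∑' j, q (M + j) := by
          rw [ENNReal.tsum_add, ENNReal.tsum_mul_right]
          gcongr
          exact mul_le_of_le_one_right' (hs0 n)
      _ ≤ ∑' j, s 0 (M + 1 + j) + ∑' i, ∑' j, q (M + 1 + i + j) + ∑' j, q (M + j) := by
          gcongr; exact ih (M + 1)
      _ = ∑' j, s 0 (M + 1 + j) + (∑' j, q (M + j) + ∑' i, ∑' j, q (M + 1 + i + j)) := by
          ring
      _ ≤ ∑' j, s 0 (M + j) + ∑' i, ∑' j, q (M + i + j) := by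
          refine add_le_add ?_ (le_of_eq ?_)
          · simpa only [add_assoc] using
              ENNReal.tsum_comp_le_tsum_of_injective (add_right_injective 1) fun j => s 0 (M + j)
          · rw [tsum_eq_zero_add' (f := fun i => ∑' j, q (M + i + j)) ENNReal.summable]
            simp only [add_zero, ← add_assoc, add_right_comm M _ 1]

end ENNReal

theorem tsum_tsum_ofReal_add_ne_top {p : ℕ → ℝ} (hp : ∀ n, 0 ≤ p n) (hps : Summable p)
    (hmean : Summable fun n : ℕ => (n : ℝ) * p n) :
    ∑' k, ∑' j, ENNReal.ofReal (p (k + j)) ≠ ∞ := by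
  have hmean' : Summable fun n : ℕ => ((n : ℝ) + 1) * p n :=
    (hmean.add hps).congr fun n => by ring
  rw [ENNReal.tsum_tsum_add_eq (fun n => ENNReal.ofReal (p n))]
  refine ne_top_of_le_ne_top ENNReal.ofReal_ne_top
    ((ENNReal.ofReal_tsum_of_nonneg (fun n => mul_nonneg (by positivity) (hp n)) hmean').ge.trans'
      (ENNReal.tsum_le_tsum fun n => ?_))
  rw [ENNReal.ofReal_mul (by positivity)]
  norm_cast

theorem norm_tsum_le_mul_toReal_tsum {E : Type*} [SeminormedAddCommGroup E] {F : ℕ → E}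
    {r : ℕ → ℝ≥0∞} {C : ℝ} (hr : ∑' j, r j ≠ ∞) (hF : ∀ j, ‖F j‖ ≤ C * (r j).toReal) :
    ‖∑' j, F j‖ ≤ C * (∑' j, r j).toReal := by
  have hCr : Summable fun j => C * (r j).toReal := (ENNReal.summable_toReal hr).mul_left C
  have hF' : Summable fun j => ‖F j‖ := hCr.of_nonneg_of_le (fun j => norm_nonneg _) hF
  calc ‖∑' j, F j‖ ≤ ∑' j, ‖F j‖ := norm_tsum_le_tsum_norm hF'
    _ ≤ ∑' j, C * (r j).toReal := hF'.tsum_le_tsum hF hCr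
    _ = C * (∑' j, r j).toReal := by
        rw [tsum_mul_left, ENNReal.tsum_toReal_eq fun j => ENNReal.ne_top_of_tsum_ne_top hr j]

theorem eventually_forall_norm_tsum_add_lt {ι E : Type*} [SeminormedAddCommGroup E]
    {F : ι → ℕ → E} {r : ι → ℕ → ℝ≥0∞} {u : ℕ → ℝ≥0∞} {C ε : ℝ} (hC : 0 ≤ C) (hε : 0 < ε)
    (hu : Tendsto u atTop (𝓝 0)) (hru : ∀ i M, ∑' j, r i (M + j) ≤ u M)
    (hF : ∀ i k, ‖F i k‖ ≤ C * (r i k).toReal) :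
    ∀ᶠ M in atTop, ∀ i, ‖∑' j, F i (M + j)‖ < ε := by
  have hCu : Tendsto (fun M => C * (u M).toReal) atTop (𝓝 0) := by
    simpa using ((ENNReal.tendsto_toReal ENNReal.zero_ne_top).comp hu).const_mul C
  filter_upwards [hCu.eventually_lt_const hε, hu.eventually_lt_const ENNReal.zero_lt_top]
    with M hCuM huM i
  calc ‖∑' j, F i (M + j)‖ ≤ C * (∑' j, r i (M + j)).toReal :=
        norm_tsum_le_mul_toReal_tsum ((hru i M).trans_lt huM).ne fun j => hF i (M + j)
    _ ≤ C * (u M).toReal := mul_le_mul_of_nonneg_left (ENNReal.toReal_mono huM.ne (hru i M)) hC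
    _ < ε := hCuM

section MarkovOperator

variable {a b : ℝ}

theorem sliceM_apply_univ (μ : Measure (ℕ × Set.Icc a b)) (k : ℕ) :
    sliceM a b μ k univ = μ ({k} ×ˢ univ) := by
  rw [sliceM, Measure.map_apply measurable_snd MeasurableSet.univ, preimage_univ,
    Measure.restrict_apply_univ]

theorem sliceM_apply_univ_le (μ : Measure (ℕ × Set.Icc a b)) (k : ℕ) :
    sliceM a b μ k univ ≤ μ univ :=
  (sliceM_apply_univ μ k).trans_le (measure_mono (subset_univ _))

theorem tsum_sliceM_apply_univ_le (μ : Measure (ℕ × Set.Icc a b)) :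
    ∑' k, sliceM a b μ k univ ≤ μ univ := by
  simpa only [sliceM_apply_univ, prod_univ] using
    tsum_measure_preimage_singleton_le μ measurable_fst

variable {p : ℕ → ℝ} (fI : ℕ → Set.Icc a b → Set.Icc a b) (μ : Measure (ℕ × Set.Icc a b))

theorem sliceM_TOp_apply_univ_le (k : ℕ) :
    sliceM a b (TOp a b p fI μ) k univ
      ≤ sliceM a b μ (k + 1) univ + ENNReal.ofReal (p k) * sliceM a b μ 0 univ := by
  have hk : MeasurableSet ({k} ×ˢ (univ : Set (Set.Icc a b))) :=
    (measurableSet_singleton k).prod MeasurableSet.univ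
  rw [sliceM_apply_univ, TOp, Measure.sum_apply _ hk]
  refine (ENNReal.tsum_le_tsum fun j => Measure.map_apply_le _ _ hk).trans_eq ?_
  have hpre : ∀ j, (fun x => (j, fI j x)) ⁻¹' ({k} ×ˢ univ) = if j = k then univ else ∅ :=
    fun j => by ext x; split_ifs <;> simp [*]
  rw [tsum_eq_single k fun j hj => by simp [hpre, hj]]
  simp [hpre]

theorem tendsto_tsum_sliceM_add_tsum_tsum_ofReal [IsFiniteMeasure μ] (hp₀ : ∀ n, 0 ≤ p n)
    (hps : Summable p) (hmean : Summable fun n : ℕ => (n : ℝ) * p n) :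
    Tendsto (fun M => ∑' j, sliceM a b μ (M + j) univ
      + ∑' i, ∑' j, ENNReal.ofReal (p (M + i + j))) atTop (𝓝 0) := by
  simpa only [add_zero] using (ENNReal.tendsto_tsum_add_atTop_zero _
      ((tsum_sliceM_apply_univ_le μ).trans_lt (measure_lt_top μ univ)).ne).add
    (ENNReal.tendsto_tsum_add_atTop_zero _ (tsum_tsum_ofReal_add_ne_top hp₀ hps hmean))

theorem TOp_apply_univ_le (hp : ∑' k, ENNReal.ofReal (p k) ≤ 1) : TOp a b p fI μ univ ≤ μ univ :=
  calc TOp a b p fI μ univ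
      ≤ ∑' j, (sliceM a b μ (j + 1) univ + ENNReal.ofReal (p j) * sliceM a b μ 0 univ) := by
        rw [TOp, Measure.sum_apply _ MeasurableSet.univ]
        exact ENNReal.tsum_le_tsum fun j => (Measure.map_apply_le _ _ MeasurableSet.univ).trans_eq
          (by simp)
    _ ≤ ∑' j, sliceM a b μ (j + 1) univ + sliceM a b μ 0 univ := by
        rw [ENNReal.tsum_add, ENNReal.tsum_mul_right]
        gcongr
        exact mul_le_of_le_one_left' hp
    _ = ∑' k, sliceM a b μ k univ := by
        rw [add_comm, tsum_eq_zero_add' (f := fun k => sliceM a b μ k univ) ENNReal.summable]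
    _ ≤ μ univ := tsum_sliceM_apply_univ_le μ

theorem TOp_iterate_apply_univ_le (hp : ∑' k, ENNReal.ofReal (p k) ≤ 1) (n : ℕ) :
    (TOp a b p fI)^[n] μ univ ≤ μ univ := by
  induction n with
  | zero => rfl
  | succ n ih =>
    rw [Function.iterate_succ_apply']
    exact (TOp_apply_univ_le fI _ hp).trans ih

theorem tsum_sliceM_TOp_iterate_le (hp : ∑' k, ENNReal.ofReal (p k) ≤ 1) (hμ : μ univ ≤ 1)
    (n M : ℕ) :
    ∑' j, sliceM a b ((TOp a b p fI)^[n] μ) (M + j) univ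
      ≤ ∑' j, sliceM a b μ (M + j) univ + ∑' i, ∑' j, ENNReal.ofReal (p (M + i + j)) :=
  ENNReal.tsum_tail_le_of_renewal (s := fun n k => sliceM a b ((TOp a b p fI)^[n] μ) k univ)
    (q := fun k => ENNReal.ofReal (p k))
    (fun n k => by
      simpa only [Function.iterate_succ_apply'] using sliceM_TOp_apply_univ_le fI _ k)
    (fun n => ((sliceM_apply_univ_le _ 0).trans (TOp_iterate_apply_univ_le fI μ hp n)).trans hμ)
    n M

end MarkovOperator

theorem stmt6_general (a b : ℝ)
    (f g : Set.Icc a b → Set.Icc a b)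
    (p : ℕ → ℝ)
    (hp : ∀ n, 0 ≤ p n) (hp1 : HasSum p 1)
    (hmean : Summable fun n : ℕ => (n : ℝ) * p n)
    (Pm : Measure (ℕ → ℕ)) [IsProbabilityMeasure Pm]
    (πm : (ℕ → ℕ) → Set.Icc a b)
    (h : ℕ × Set.Icc a b → ℝ) (hhb : ∃ C, ∀ z, |h z| ≤ C)
    (μ : Measure (ℕ × Set.Icc a b)) [IsProbabilityMeasure μ]
    (ε : ℝ) (hε : 0 < ε) :
    ∃ N M : ℕ,
      |∑' j : ℕ, ∫ ω in {ω : ℕ → ℕ | ω 0 = M + j}, h (M + j, πm ω) ∂Pm| < ε ∧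
      ∀ n, N ≤ n →
        |∑' j : ℕ, ∫ x, h (M + j, x)
            ∂(sliceM a b ((TOp a b p (fseq a b g f))^[n] μ) (M + j))| < ε := by
  obtain ⟨C, hC⟩ := hhb
  have hC' : ∀ z, ‖h z‖ ≤ max C 0 := fun z => (hC z).trans (le_max_left _ _)
  set T := TOp a b p (fseq a b g f)
  have hq : ∑' k, ENNReal.ofReal (p k) ≤ 1 := by
    rw [← ENNReal.ofReal_tsum_of_nonneg hp hp1.summable, hp1.tsum_eq, ENNReal.ofReal_one]
  have hPm_tail := ENNReal.tendsto_tsum_add_atTop_zero (fun k => Pm {ω : ℕ → ℕ | ω 0 = k})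
    ((tsum_measure_preimage_singleton_le Pm (measurable_pi_apply 0)).trans_lt
      (measure_lt_top Pm univ)).ne
  have hPm_small := eventually_forall_norm_tsum_add_lt (ι := Unit)
    (F := fun _ k => ∫ ω in {ω : ℕ → ℕ | ω 0 = k}, h (k, πm ω) ∂Pm)
    (le_max_right C 0) hε hPm_tail (fun _ M => le_rfl) fun _ k =>
      norm_setIntegral_le_of_norm_le_const (measure_lt_top _ _) fun ω _ => hC' (k, πm ω)
  have hT_small := eventually_forall_norm_tsum_add_lt
    (F := fun n k => ∫ x, h (k, x) ∂sliceM a b (T^[n] μ) k)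
    (le_max_right C 0) hε (tendsto_tsum_sliceM_add_tsum_tsum_ofReal μ hp hp1.summable hmean)
    (tsum_sliceM_TOp_iterate_le _ μ hq prob_le_one) fun n k => by
      have : IsFiniteMeasure (sliceM a b (T^[n] μ) k) :=
        ⟨((sliceM_apply_univ_le _ k).trans (TOp_iterate_apply_univ_le _ μ hq n)).trans_lt
          (measure_lt_top μ univ)⟩
      exact norm_integral_le_of_norm_le_const (.of_forall fun x => hC' (k, x))
  obtain ⟨M, hM_Pm, hM_T⟩ := (hPm_small.and hT_small).exists
  exact ⟨0, M, hM_Pm (), fun n _ => hM_T n⟩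

/-- Lemma 3: the tails (over j ≥ M) of both sums are uniformly small for
n large. -/
theorem stmt6 (a b : ℝ) (hab : a < b)
    (f g : Set.Icc a b → Set.Icc a b) (hfc : Continuous f) (hgc : Continuous g)
    (p : ℕ → ℝ) (E : ℝ)
    (hp : ∀ n, 0 ≤ p n) (hp1 : HasSum p 1) (hp0 : 0 < p 0)
    (hmean : Summable fun n : ℕ => (n : ℝ) * p n)
    (hE : E = ∑' n : ℕ, (n : ℝ) * p n)
    (hsupp : ∀ N : ℕ, ∃ n, N ≤ n ∧ 0 < p n)
    (Pm : Measure (ℕ → ℕ)) [IsProbabilityMeasure Pm]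
    (hPm : ∀ n, 1 ≤ n → ∀ ξ : ℕ → ℕ, Pm (cyl ξ n) = ENNReal.ofReal (cylProbQ p E ξ n))
    (πm : (ℕ → ℕ) → Set.Icc a b) (hπmeas : Measurable πm)
    (hπ : ∀ ξ ∈ Sset a b (fseq a b g f), ∀ x : Set.Icc a b,
      Tendsto (fun n => itf a b (fseq a b g f) ξ (n + 1) x) atTop (𝓝 (πm ξ)))
    (h : ℕ × Set.Icc a b → ℝ) (hhc : Continuous h) (hhb : ∃ C, ∀ z, |h z| ≤ C)
    (μ : Measure (ℕ × Set.Icc a b)) [IsProbabilityMeasure μ]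
    (ε : ℝ) (hε : 0 < ε) :
    ∃ N M : ℕ,
      |∑' j : ℕ, ∫ ω in {ω : ℕ → ℕ | ω 0 = M + j}, h (M + j, πm ω) ∂Pm| < ε ∧
      ∀ n, N ≤ n →
        |∑' j : ℕ, ∫ x, h (M + j, x)
            ∂(sliceM a b ((TOp a b p (fseq a b g f))^[n] μ) (M + j))| < ε :=
  stmt6_general a b f g p hp hp1 hmean Pm πm h hhb μ ε hε

end
end

section
/- If g is Lipschitz with constant L₀ > 0 and f is Lipschitz with constant L₁ > 0 (so f_i has Lipschitz constant L_i with L_i = L₁ for i ≥ 1), and ξ ∈ Σ satisfies lim sup_{n→∞} (1/n)·∑_{k=0}^{n-1} log L_{ξ_k} < 0, then diam(I_ξ) = 0, i.e. ξ ∈ S. -/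
open MeasureTheory Filter Topology Set
open scoped BigOperators

noncomputable section

/-! `I_ξ` lies in the image of `I` under `f_{ξ₀} ∘ ⋯ ∘ f_{ξ_{n-1}}`, a map with Lipschitz constant
`∏_{k<n} L_{ξ_k} = exp (∑_{k<n} log L_{ξ_k}) ≤ e^{cn}` for some `c < 0` and all large `n`. Hence
`diam I_ξ ≤ e^{cn} · diam I → 0`. -/

theorem Real.eventually_lt_of_limsup_lt_of_nonpos {ι : Type*} {F : Filter ι} {u : ι → ℝ} {b : ℝ}
    (h : limsup u F < b) (hb : b ≤ 0) : ∀ᶠ i in F, u i < b := by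
  -- an unbounded `u` would have the junk value `limsup u F = 0`
  have hbdd : IsBoundedUnder (· ≤ ·) F u := by
    by_contra hbdd
    rw [Real.limsup_of_not_isBoundedUnder hbdd] at h
    linarith
  exact eventually_lt_of_limsup_lt h hbdd

theorem tendsto_prod_range_nhds_zero_of_limsup_avg_log_neg {L : ℕ → ℝ} (hL : ∀ k, 0 < L k)
    (h : limsup (fun n : ℕ => (1 / (n : ℝ)) * ∑ k ∈ Finset.range n, Real.log (L k)) atTop < 0) :
    Tendsto (fun n => ∏ k ∈ Finset.range n, L k) atTop (𝓝 0) := by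
  obtain ⟨c, hlimc, hc⟩ := exists_between h
  have hlt := Real.eventually_lt_of_limsup_lt_of_nonpos hlimc hc.le
  refine squeeze_zero' (.of_forall fun n => Finset.prod_nonneg fun k _ => (hL k).le) ?_
    (tendsto_pow_atTop_nhds_zero_of_lt_one (Real.exp_pos c).le (Real.exp_lt_one_iff.2 hc))
  filter_upwards [hlt, eventually_gt_atTop 0] with n hn hn0
  rw [one_div_mul_eq_div, div_lt_iff₀' (by exact_mod_cast hn0)] at hn
  calc ∏ k ∈ Finset.range n, L k = Real.exp (∑ k ∈ Finset.range n, Real.log (L k)) := by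
        rw [Real.exp_sum]
        exact Finset.prod_congr rfl fun k _ => (Real.exp_log (hL k)).symm
    _ ≤ Real.exp (n * c) := Real.exp_le_exp.2 hn.le
    _ = Real.exp c ^ n := Real.exp_nat_mul c n

section Iterates

variable {a b : ℝ} {fI : ℕ → Set.Icc a b → Set.Icc a b} {K : ℕ → NNReal}

theorem lipschitzWith_itf (hK : ∀ k, LipschitzWith (K k) (fI k)) (ξ : ℕ → ℕ) :
    ∀ n, LipschitzWith (∏ i ∈ Finset.range n, K (ξ i)) (itf a b fI ξ n)
  | 0 => by simpa [itf] using LipschitzWith.id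
  | n + 1 => by
    rw [Finset.prod_range_succ]
    exact (lipschitzWith_itf hK ξ n).comp (hK (ξ n))

theorem ediam_Iset_le (hK : ∀ k, LipschitzWith (K k) (fI k)) (ξ : ℕ → ℕ) (n : ℕ) :
    Metric.ediam (Iset a b fI ξ) ≤
      (∏ i ∈ Finset.range n, K (ξ i)) * Metric.ediam (univ : Set (Set.Icc a b)) :=
  calc Metric.ediam (Iset a b fI ξ) ≤ Metric.ediam (itf a b fI ξ n '' univ) := by
        refine Metric.ediam_mono fun x hx => ?_
        cases n with
        | zero => simp [itf]
        | succ n => exact mem_iInter.1 hx n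
    _ ≤ _ := (lipschitzWith_itf hK ξ n).ediam_image_le univ

end Iterates

theorem lipschitzWith_fseq {a b L0 L1 : ℝ} {f g : Set.Icc a b → Set.Icc a b}
    (hgL : ∀ x y, dist (g x) (g y) ≤ L0 * dist x y) (hfL : ∀ x y, dist (f x) (f y) ≤ L1 * dist x y)
    (k : ℕ) : LipschitzWith (if k = 0 then L0 else L1).toNNReal (fseq a b g f k) := by
  unfold fseq
  split_ifs
  exacts [.of_dist_le' hgL, .of_dist_le' hfL]

theorem stmt10_general (a b : ℝ)
    (f g : Set.Icc a b → Set.Icc a b)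
    (L0 L1 : ℝ) (hL0 : 0 < L0) (hL1 : 0 < L1)
    (hgL : ∀ x y : Set.Icc a b, dist (g x) (g y) ≤ L0 * dist x y)
    (hfL : ∀ x y : Set.Icc a b, dist (f x) (f y) ≤ L1 * dist x y)
    (ξ : ℕ → ℕ)
    (hlim : Filter.limsup
        (fun n : ℕ => (1 / (n : ℝ)) *
          ∑ k ∈ Finset.range n, Real.log (if ξ k = 0 then L0 else L1)) atTop < 0) :
    EMetric.diam (Iset a b (fseq a b g f) ξ) = 0 := by
  set L : ℕ → ℝ := fun k => if k = 0 then L0 else L1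
  have hLpos : ∀ k, 0 < L (ξ k) := fun k => by by_cases h : ξ k = 0 <;> simp [L, h, hL0, hL1]
  have hprod : Tendsto (fun n => ENNReal.ofReal (∏ k ∈ Finset.range n, L (ξ k))) atTop (𝓝 0) :=
    ENNReal.ofReal_zero ▸ ENNReal.tendsto_ofReal
      (tendsto_prod_range_nhds_zero_of_limsup_avg_log_neg hLpos hlim)
  have hbound : Tendsto (fun n => ENNReal.ofReal (∏ k ∈ Finset.range n, L (ξ k)) *
      Metric.ediam (univ : Set (Set.Icc a b))) atTop (𝓝 0) := by
    simpa using ENNReal.Tendsto.mul_const hprod (.inr isCompact_univ.isBounded.ediam_ne_top)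
  refine nonpos_iff_eq_zero.1 (ge_of_tendsto' hbound fun n => ?_)
  rw [ENNReal.ofReal_prod_of_nonneg fun k _ => (hLpos k).le]
  have hdiam := ediam_Iset_le (lipschitzWith_fseq hgL hfL) ξ n
  rwa [ENNReal.ofNNReal_finsetProd] at hdiam

/-- if limsup (1/n)·∑_{k<n} log L_{ξ_k} < 0, then diam(I_ξ) = 0,
i.e. ξ ∈ S. -/
theorem stmt10 (a b : ℝ) (hab : a < b)
    (f g : Set.Icc a b → Set.Icc a b) (hfc : Continuous f) (hgc : Continuous g)
    (L0 L1 : ℝ) (hL0 : 0 < L0) (hL1 : 0 < L1)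
    (hgL : ∀ x y : Set.Icc a b, dist (g x) (g y) ≤ L0 * dist x y)
    (hfL : ∀ x y : Set.Icc a b, dist (f x) (f y) ≤ L1 * dist x y)
    (ξ : ℕ → ℕ)
    (hlim : Filter.limsup
        (fun n : ℕ => (1 / (n : ℝ)) *
          ∑ k ∈ Finset.range n, Real.log (if ξ k = 0 then L0 else L1)) atTop < 0) :
    EMetric.diam (Iset a b (fseq a b g f) ξ) = 0 :=
  stmt10_general a b f g L0 L1 hL0 hL1 hgL hfL ξ hlim

end
end
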